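/- If H is a 6-partite intersecting hypergraph with 12 edges in which every part has at least 5 vertices incident to an edge and Δ(H) ≤ 3, then H is not intersecting (contradiction): the total number of pairwise intersections realizable is at most 60 < C(12,2) = 66. Formally: there is no 6-partite intersecting hypergraph with 12 edges, maximum degree at most 3, and covering number 5. -/

import Mathlib

def Intersecting {V : Type*} (E : Finset (Finset V)) : Prop :=
  ∀ e ∈ E, ∀ f ∈ E, ∃ v, v ∈ e ∧ v ∈ f

def IsCover {V : Type*} (E : Finset (Finset V)) (C : Finset V) : Prop :=
  ∀ e ∈ E, ∃ v ∈ C, v ∈ e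

noncomputable def coverNum {V : Type*} (E : Finset (Finset V)) : ℕ :=
  sInf {n | ∃ C : Finset V, IsCover E C ∧ C.card = n}

def Partite {V : Type*} (r : ℕ) (part : V → Fin r) (E : Finset (Finset V)) : Prop :=
  ∀ e ∈ E, ∀ i : Fin r, (e.filter (fun v => part v = i)).card = 1

open Classical in
noncomputable def deg {V : Type*} (E : Finset (Finset V)) (v : V) : ℕ :=
  (E.filter (fun e => v ∈ e)).card

/-!
Every edge has exactly one vertex in each part, so the vertices of a part that lie on edges
form a cover (hence there are at least `τ = 5` of them) and their degrees sum to `#E = 12`.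
With degrees between `1` and `3`, `d (d - 1) ≤ 3 (d - 1)`, so the ordered pairs of distinct edges
meeting in a given part number at most `3 (12 - 5) = 21`. Since `E` is intersecting, every one of
the `12 · 11 = 132` ordered pairs of distinct edges meets in some part, but `6 · 21 = 126 < 132`.
-/

open Finset

variable {V : Type*}

theorem coverNum_le_card {E : Finset (Finset V)} {C : Finset V} (hC : IsCover E C) :
    coverNum E ≤ #C :=
  Nat.sInf_le ⟨C, hC, rfl⟩

theorem sum_mul_pred_add_le {ι : Type*} {s : Finset ι} {f : ι → ℕ} {k : ℕ}
    (hpos : ∀ i ∈ s, 1 ≤ f i) (hle : ∀ i ∈ s, f i ≤ k) :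
    ∑ i ∈ s, f i * (f i - 1) + k * #s ≤ k * ∑ i ∈ s, f i := by
  rw [mul_sum, card_eq_sum_ones, mul_sum, ← sum_add_distrib]
  refine sum_le_sum fun i hi => ?_
  have hmul : f i * (f i - 1) ≤ k * (f i - 1) := Nat.mul_le_mul_right _ (hle i hi)
  have hsplit : k * (f i - 1) + k * 1 = k * f i := by
    rw [← Nat.mul_add, Nat.sub_add_cancel (hpos i hi)]
  omega

theorem filter_biUnion_id_inter_of_mem [DecidableEq V] {E : Finset (Finset V)} (p : V → Prop)
    [DecidablePred p] {e : Finset V} (he : e ∈ E) :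
    {v ∈ E.biUnion id | p v} ∩ e = {v ∈ e | p v} := by
  ext v
  simp only [mem_inter, mem_filter, mem_biUnion, id]
  exact ⟨fun ⟨⟨_, hp⟩, hve⟩ => ⟨hve, hp⟩, fun ⟨hve, hp⟩ => ⟨⟨⟨e, he, hve⟩, hp⟩, hve⟩⟩

section

open Classical

theorem one_le_deg_of_mem_biUnion {E : Finset (Finset V)} {v : V} (hv : v ∈ E.biUnion id) :
    1 ≤ deg E v := by
  obtain ⟨e, he, hve⟩ := mem_biUnion.mp hv
  exact card_pos.mpr ⟨e, mem_filter.mpr ⟨he, hve⟩⟩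

theorem Intersecting.card_mul_pred_le {E : Finset (Finset V)} (hE : Intersecting E) :
    #E * (#E - 1) ≤ ∑ v ∈ E.biUnion id, deg E v * (deg E v - 1) := by
  have hsub : E.offDiag ⊆ (E.biUnion id).biUnion fun v => ({e ∈ E | v ∈ e}).offDiag := by
    intro p hp
    obtain ⟨h₁, h₂, hne⟩ := mem_offDiag.mp hp
    obtain ⟨v, hv₁, hv₂⟩ := hE p.1 h₁ p.2 h₂
    exact mem_biUnion.mpr ⟨v, mem_biUnion.mpr ⟨p.1, h₁, hv₁⟩,
      mem_offDiag.mpr ⟨mem_filter.mpr ⟨h₁, hv₁⟩, mem_filter.mpr ⟨h₂, hv₂⟩, hne⟩⟩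
  calc #E * (#E - 1) = #E.offDiag := by rw [offDiag_card, Nat.mul_sub_one]
    _ ≤ ∑ v ∈ E.biUnion id, #({e ∈ E | v ∈ e}).offDiag :=
        (card_le_card hsub).trans card_biUnion_le
    _ = ∑ v ∈ E.biUnion id, deg E v * (deg E v - 1) := by
        simp only [offDiag_card, Nat.mul_sub_one]
        rfl

namespace Partite

variable {r : ℕ} {part : V → Fin r} {E : Finset (Finset V)}

theorem isCover_filter_part (hP : Partite r part E) (i : Fin r) :
    IsCover E {v ∈ E.biUnion id | part v = i} := by
  intro e he
  obtain ⟨v, hv⟩ := card_pos.mp (zero_lt_one.trans_eq (hP e he i).symm)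
  rw [← filter_biUnion_id_inter_of_mem (part · = i) he] at hv
  exact ⟨v, mem_of_mem_inter_left hv, mem_of_mem_inter_right hv⟩

theorem sum_deg_filter_part (hP : Partite r part E) (i : Fin r) :
    ∑ v ∈ E.biUnion id with part v = i, deg E v = #E := by
  calc ∑ v ∈ E.biUnion id with part v = i, deg E v
      = ∑ e ∈ E, #{v ∈ {v ∈ E.biUnion id | part v = i} | v ∈ e} :=
        sum_card_bipartiteAbove_eq_sum_card_bipartiteBelow (r := fun v e => v ∈ e)
    _ = ∑ _e ∈ E, 1 := sum_congr rfl fun e he => by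
        rw [filter_mem_eq_inter, filter_biUnion_id_inter_of_mem (part · = i) he, hP e he i]
    _ = #E := (card_eq_sum_ones E).symm

theorem sum_deg_mul_pred_add_le (hP : Partite r part E) {k : ℕ} (hdeg : ∀ v, deg E v ≤ k)
    (i : Fin r) :
    ∑ v ∈ E.biUnion id with part v = i, deg E v * (deg E v - 1) + k * coverNum E ≤ k * #E := by
  have hbound := sum_mul_pred_add_le (s := {v ∈ E.biUnion id | part v = i})
    (fun v hv => one_le_deg_of_mem_biUnion (mem_filter.mp hv).1) (fun v _ => hdeg v)
  rw [hP.sum_deg_filter_part i] at hbound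
  have hcover := Nat.mul_le_mul_left k (coverNum_le_card (hP.isCover_filter_part i))
  omega

end Partite

theorem Partite.card_mul_pred_add_le {r k : ℕ} {part : V → Fin r} {E : Finset (Finset V)}
    (hP : Partite r part E) (hI : Intersecting E) (hdeg : ∀ v, deg E v ≤ k) :
    #E * (#E - 1) + r * (k * coverNum E) ≤ r * (k * #E) := by
  calc #E * (#E - 1) + r * (k * coverNum E)
      ≤ ∑ i, ∑ v ∈ E.biUnion id with part v = i, deg E v * (deg E v - 1)
          + ∑ _i : Fin r, k * coverNum E := by
        rw [sum_fiberwise, sum_const, card_univ, Fintype.card_fin, smul_eq_mul]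
        exact Nat.add_le_add_right hI.card_mul_pred_le _
    _ ≤ ∑ _i : Fin r, k * #E := by
        rw [← sum_add_distrib]
        exact sum_le_sum fun i _ => hP.sum_deg_mul_pred_add_le hdeg i
    _ = r * (k * #E) := by simp

end

theorem stmt8 :
    ¬ ∃ (V : Type) (part : V → Fin 6) (E : Finset (Finset V)),
      Partite 6 part E ∧ Intersecting E ∧ E.card = 12 ∧
      (∀ v : V, deg E v ≤ 3) ∧ coverNum E = 5 := by
  rintro ⟨V, part, E, hPart, hInt, hcard, hdeg, hcov⟩
  have hcount := hPart.card_mul_pred_add_le hInt hdeg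
  rw [hcard, hcov] at hcount
  norm_num at hcount
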